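/- arXiv:1906.02867 — 8 statements merged into one kernel-verified Lean document; each statement's English description precedes it below -/
import Mathlib

section
/- For every prime p and every integer e ≥ 1, there exists a polynomial F with integer coefficients of degree at most p such that for all integers z₀, z₁ with 0 ≤ z₀ < p and every integer e' with 1 ≤ e' ≤ e, one has F(z₀ + p^{e'}·z₁) ≡ z₀ (mod p^{e'+1}). -/
/-!
Take `F = X + ∏_{0 ≤ i < p} (X - i)`. Every residue `0 ≤ z₀ < p` is a root of the product, so
`F(z₀) = z₀`; and modulo `p` the product is `∏_{a ∈ 𝔽_p} (X - a) = X ^ p - X`, so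
`F' ≡ p X ^ (p - 1) ≡ 0 (mod p)`. The Taylor expansion
`F(z₀ + h) = F(z₀) + F'(z₀) h + k h²` with `h = p ^ e' z₁` then gives the claim, since both
`F'(z₀) h` and `h²` are divisible by `p ^ (e' + 1)` when `e' ≥ 1`.
-/

open Polynomial Finset

theorem Polynomial.eval_add_modEq_eval {F : ℤ[X]} {x h m : ℤ}
    (hd : m ∣ F.derivative.eval x * h) (hsq : m ∣ h ^ 2) :
    F.eval (x + h) ≡ F.eval x [ZMOD m] := by
  obtain ⟨k, hk⟩ := F.binomExpansion x h
  rw [hk, Int.modEq_comm, Int.modEq_iff_dvd, add_assoc, add_sub_cancel_left]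
  exact dvd_add hd (dvd_mul_of_dvd_right hsq k)

theorem FiniteField.prod_X_sub_C_eq_X_pow_card_sub_X (K : Type*) [Field K] [Fintype K] :
    ∏ a : K, (X - C a) = X ^ Fintype.card K - X := by
  have hmonic : (X ^ Fintype.card K - X : K[X]).Monic :=
    monic_X_pow_sub (by simpa using Fintype.one_lt_card)
  have h := prod_multiset_X_sub_C_of_monic_of_roots_card_eq hmonic ?_
  · rwa [roots_X_pow_card_sub_X] at h
  · rw [roots_X_pow_card_sub_X, X_pow_card_sub_X_natDegree_eq K Fintype.one_lt_card]
    simp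

theorem map_prod_range_X_sub_C_eq_X_pow_sub_X (p : ℕ) [Fact p.Prime] :
    (∏ i ∈ range p, (X - C (i : ℤ))).map (Int.castRingHom (ZMod p)) = X ^ p - X := by
  have h := FiniteField.prod_X_sub_C_eq_X_pow_card_sub_X (ZMod p)
  rw [ZMod.card] at h
  rw [← h, Polynomial.map_prod]
  refine prod_nbij' (fun i => (i : ZMod p)) ZMod.val (by simp)
    (fun a _ => by simpa using a.val_lt) (fun i hi => ZMod.val_natCast_of_lt (mem_range.mp hi))
    (fun a _ => by simp) (fun i _ => by simp)

theorem eval_derivative_prod_range_X_sub_C_modEq {p : ℕ} (hp : p.Prime) (x : ℤ) :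
    (∏ i ∈ range p, (X - C (i : ℤ))).derivative.eval x ≡ -1 [ZMOD p] := by
  have := Fact.mk hp
  have h := eval_intCast_map (Int.castRingHom (ZMod p))
    (∏ i ∈ range p, (X - C (i : ℤ))).derivative x
  rw [← derivative_map, map_prod_range_X_sub_C_eq_X_pow_sub_X, eq_intCast, Int.cast_id] at h
  rw [← ZMod.intCast_eq_intCast_iff, ← h]
  simp [derivative_X_pow]

noncomputable def liftingPolynomial (p : ℕ) : ℤ[X] :=
  X + ∏ i ∈ range p, (X - C (i : ℤ))

theorem natDegree_liftingPolynomial_le {p : ℕ} (hp : 1 ≤ p) :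
    (liftingPolynomial p).natDegree ≤ p :=
  (natDegree_add_le _ _).trans <| by
    rw [natDegree_X, natDegree_finsetProd_X_sub_C_eq_card, card_range]
    exact max_le hp le_rfl

theorem eval_liftingPolynomial_of_lt {p : ℕ} {z : ℤ} (h₀ : 0 ≤ z) (hp : z < p) :
    (liftingPolynomial p).eval z = z := by
  have hz : z.toNat ∈ range p := mem_range.mpr (by omega)
  simp only [liftingPolynomial, eval_add, eval_X, eval_prod, eval_sub, eval_C, add_eq_left]
  exact prod_eq_zero hz (by simp [h₀])

theorem dvd_eval_derivative_liftingPolynomial {p : ℕ} (hp : p.Prime) (x : ℤ) :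
    (p : ℤ) ∣ (liftingPolynomial p).derivative.eval x := by
  rw [liftingPolynomial, derivative_add, derivative_X, eval_add, eval_one, add_comm]
  simpa using (eval_derivative_prod_range_X_sub_C_modEq hp x).symm.dvd

theorem lifting_polynomial_exists_general (p : ℕ) (hp : p.Prime) (e : ℕ) :
    ∃ F : Polynomial ℤ, F.natDegree ≤ p ∧
      ∀ z₀ z₁ : ℤ, 0 ≤ z₀ → z₀ < (p : ℤ) →
        ∀ e' : ℕ, 1 ≤ e' → e' ≤ e →
          F.eval (z₀ + (p : ℤ) ^ e' * z₁) ≡ z₀ [ZMOD (p : ℤ) ^ (e' + 1)] := by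
  refine ⟨liftingPolynomial p, natDegree_liftingPolynomial_le hp.one_lt.le, ?_⟩
  intro z₀ z₁ h₀ hz₀ e' he' _
  obtain ⟨k, hk⟩ := dvd_eval_derivative_liftingPolynomial hp z₀
  calc (liftingPolynomial p).eval (z₀ + p ^ e' * z₁)
      ≡ (liftingPolynomial p).eval z₀ [ZMOD p ^ (e' + 1)] := eval_add_modEq_eval ?_ ?_
    _ = z₀ := eval_liftingPolynomial_of_lt h₀ hz₀
  · exact ⟨k * z₁, by rw [hk]; ring⟩
  · rw [mul_pow, ← pow_mul]
    exact (pow_dvd_pow _ (by omega)).mul_right _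

/-- Halevi–Shoup lifting polynomial. -/
theorem lifting_polynomial_exists (p : ℕ) (hp : p.Prime) (e : ℕ) (he : 1 ≤ e) :
    ∃ F : Polynomial ℤ, F.natDegree ≤ p ∧
      ∀ z₀ z₁ : ℤ, 0 ≤ z₀ → z₀ < (p : ℤ) →
        ∀ e' : ℕ, 1 ≤ e' → e' ≤ e →
          F.eval (z₀ + (p : ℤ) ^ e' * z₁) ≡ z₀ [ZMOD (p : ℤ) ^ (e' + 1)] :=
  lifting_polynomial_exists_general p hp e
end

section
/- For every prime p and every integer e ≥ 1, there exists a polynomial G with integer coefficients of degree at most p^{e−1} such that for all integers z₀, z₁ with 0 ≤ z₀ < p, one has G(z₀ + p·z₁) ≡ z₀ (mod p^e). -/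
open Polynomial Finset

/-- Polynomial evaluation respects integer congruences. -/
private lemma poly_eval_modeq (f : Polynomial ℤ) {n x y : ℤ} (h : x ≡ y [ZMOD n]) :
    f.eval x ≡ f.eval y [ZMOD n] := by
  induction f using Polynomial.induction_on' with
  | add p q hp hq => simpa using hp.add hq
  | monomial k c => simpa [Polynomial.eval_monomial] using (h.pow k).mul_left c

/-- If `p^s ∣ x - y` with `s ≥ 1`, then `p^(s+1) ∣ x^p - y^p`. -/
private lemma pow_p_lift (p : ℕ) (hp : p.Prime) {s : ℕ} (hs : 1 ≤ s) {x y : ℤ}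
    (h : (p:ℤ)^s ∣ x - y) : ((p:ℤ))^(s+1) ∣ x^p - y^p := by
  have hp1 : (p:ℤ) ∣ x - y := dvd_trans (dvd_pow_self _ (by omega)) h
  have hxy : (x : ZMod p) = (y : ZMod p) := by
    have := (ZMod.intCast_zmod_eq_zero_iff_dvd (x - y) p).mpr hp1
    push_cast at this
    exact sub_eq_zero.mp this
  set S : ℤ := ∑ i ∈ range p, x ^ i * y ^ (p - 1 - i) with hS
  have hgeom : S * (x - y) = x ^ p - y ^ p := geom_sum₂_mul x y p
  have hpS : (p:ℤ) ∣ S := by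
    have : (S : ZMod p) = 0 := by
      push_cast [hS]
      have : ∀ i ∈ range p, (x:ZMod p) ^ i * (y:ZMod p) ^ (p - 1 - i) = (y:ZMod p) ^ (p-1) := by
        intro i hi
        rw [hxy, ← pow_add]
        congr 1
        have := mem_range.mp hi
        omega
      rw [Finset.sum_congr rfl this]
      simp [Finset.sum_const, ZMod.natCast_self]
    exact (ZMod.intCast_zmod_eq_zero_iff_dvd S p).mp this
  calc ((p:ℤ))^(s+1) = (p:ℤ) * (p:ℤ)^s := by ring
  _ ∣ S * (x - y) := mul_dvd_mul hpS h
  _ = x ^ p - y ^ p := hgeom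

/-- `X^p - X - ∏_{a<p} (X - a)` is divisible by `p` in `ℤ[X]`. -/
private lemma exists_D (p : ℕ) (hp : p.Prime) :
    ∃ D : Polynomial ℤ, (X:Polynomial ℤ)^p - X - (∏ a ∈ range p, (X - C (a:ℤ))) = C (p:ℤ) * D := by
  haveI : Fact p.Prime := ⟨hp⟩
  set W : Polynomial ℤ := ∏ a ∈ range p, (X - C (a:ℤ)) with hW
  have key : ∀ i, (p:ℤ) ∣ ((X:Polynomial ℤ)^p - X - W).coeff i := by
    have hmap : ((X:Polynomial ℤ)^p - X - W).map (Int.castRingHom (ZMod p)) = 0 := by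
      have hWmap : W.map (Int.castRingHom (ZMod p))
          = ∏ a ∈ range p, (X - C ((a:ℕ) : ZMod p)) := by
        simp [hW, Polynomial.map_prod]
      have hprod : (∏ a ∈ range p, (X - C ((a:ℕ) : ZMod p)))
          = ∏ x : ZMod p, (X - C x) := by
        apply Finset.prod_bij (fun a _ => ((a:ℕ) : ZMod p))
        · intros; exact mem_univ _
        · intro a ha b hb hab
          have ha' := mem_range.mp ha
          have hb' := mem_range.mp hb
          have := congrArg ZMod.val hab
          rwa [ZMod.val_cast_of_lt ha', ZMod.val_cast_of_lt hb'] at this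
        · intro b _
          exact ⟨b.val, mem_range.mpr (ZMod.val_lt b), ZMod.natCast_rightInverse b⟩
        · intros; rfl
      have hff : (∏ x : ZMod p, (X - C x)) = (X:Polynomial (ZMod p))^p - X := by
        have hmon : ((X:Polynomial (ZMod p))^p - X).Monic := by
          apply monic_X_pow_sub
          simpa using hp.one_lt
        have hdeg : ((X:Polynomial (ZMod p))^p - X).natDegree = p :=
          FiniteField.X_pow_card_sub_X_natDegree_eq _ hp.one_lt
        have hroots : ((X:Polynomial (ZMod p))^p - X).roots = Finset.univ.val := by
          have := FiniteField.roots_X_pow_card_sub_X (ZMod p)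
          rwa [ZMod.card] at this
        have := prod_multiset_X_sub_C_of_monic_of_roots_card_eq hmon
          (by rw [hroots, hdeg]; simpa using (ZMod.card p))
        rw [hroots] at this
        rw [← this]
        rfl
      rw [Polynomial.map_sub, Polynomial.map_sub, Polynomial.map_pow, Polynomial.map_X,
        hWmap, hprod, hff]
      ring
    intro i
    have := congrArg (fun q => Polynomial.coeff q i) hmap
    simp only [Polynomial.coeff_map, Polynomial.coeff_zero] at this
    exact (ZMod.intCast_zmod_eq_zero_iff_dvd _ p).mp this
  exact (Polynomial.C_dvd_iff_dvd_coeff _ _).mpr key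

/-- Lowest-digit-extraction polynomial of degree at most p^(e-1) (Halevi–Shoup). -/
theorem lowest_digit_extraction_HS (p : ℕ) (hp : p.Prime) (e : ℕ) (he : 1 ≤ e) :
    ∃ G : Polynomial ℤ, G.natDegree ≤ p ^ (e - 1) ∧
      ∀ z₀ z₁ : ℤ, 0 ≤ z₀ → z₀ < (p : ℤ) →
        G.eval (z₀ + (p : ℤ) * z₁) ≡ z₀ [ZMOD (p : ℤ) ^ e] := by
  obtain ⟨D, hD⟩ := exists_D p hp
  set W : Polynomial ℤ := ∏ a ∈ range p, (X - C (a:ℤ)) with hWdef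
  set F : Polynomial ℤ := X + W with hFdef
  -- F = X^p - C p * D
  have hF : F = X^p - C (p:ℤ) * D := by
    rw [hFdef]
    linear_combination -hD
  -- F fixes each digit z₀ ∈ [0, p)
  have hFfix : ∀ z₀ : ℤ, 0 ≤ z₀ → z₀ < (p:ℤ) → F.eval z₀ = z₀ := by
    intro z₀ h0 h1
    have hWz : W.eval z₀ = 0 := by
      rw [hWdef, Polynomial.eval_prod]
      apply Finset.prod_eq_zero (i := z₀.toNat)
      · exact mem_range.mpr (by omega)
      · simp [Int.toNat_of_nonneg h0]
    simp [hFdef, hWz]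
  -- the lifting property of F
  have hFdeg : F.natDegree ≤ p := by
    have hWdeg : W.natDegree ≤ p := by
      calc W.natDegree ≤ ∑ a ∈ range p, (X - C (a:ℤ)).natDegree := natDegree_prod_le _ _
      _ = p := by simp only [natDegree_X_sub_C]; simp
    calc F.natDegree ≤ max (X:Polynomial ℤ).natDegree W.natDegree := natDegree_add_le _ _
    _ ≤ p := by
        simp only [natDegree_X, max_le_iff]
        exact ⟨hp.one_lt.le, hWdeg⟩
  have hlift : ∀ s : ℕ, 1 ≤ s → ∀ x y : ℤ, (p:ℤ)^s ∣ x - y →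
      (p:ℤ)^(s+1) ∣ F.eval x - F.eval y := by
    intro s hs x y hxy
    have h1 : (p:ℤ)^(s+1) ∣ x^p - y^p := pow_p_lift p hp hs hxy
    have h2 : (p:ℤ)^s ∣ D.eval x - D.eval y := by
      have hmeq : x ≡ y [ZMOD (p:ℤ)^s] := Int.modEq_iff_dvd.mpr (dvd_sub_comm.mp hxy)
      exact dvd_sub_comm.mp (poly_eval_modeq D hmeq).dvd
    have heq : F.eval x - F.eval y = (x^p - y^p) - (p:ℤ) * (D.eval x - D.eval y) := by
      rw [hF]; simp; ring
    rw [heq]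
    apply dvd_sub h1
    calc ((p:ℤ))^(s+1) = (p:ℤ) * (p:ℤ)^s := by ring
    _ ∣ (p:ℤ) * (D.eval x - D.eval y) := mul_dvd_mul_left _ h2
  -- main induction: iterating F
  have main : ∀ k : ℕ, ∃ G : Polynomial ℤ, G.natDegree ≤ p ^ k ∧
      ∀ z₀ z₁ : ℤ, 0 ≤ z₀ → z₀ < (p:ℤ) →
        (p:ℤ)^(k+1) ∣ G.eval (z₀ + (p:ℤ) * z₁) - z₀ := by
    intro k
    induction k with
    | zero =>
      refine ⟨X, by simp, fun z₀ z₁ h0 h1 => ?_⟩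
      simp only [eval_X, pow_one]
      exact ⟨z₁, by ring⟩
    | succ k ih =>
      obtain ⟨G, hGdeg, hG⟩ := ih
      refine ⟨F.comp G, ?_, fun z₀ z₁ h0 h1 => ?_⟩
      · calc (F.comp G).natDegree ≤ F.natDegree * G.natDegree := natDegree_comp_le
        _ ≤ p * p ^ k := Nat.mul_le_mul hFdeg hGdeg
        _ = p ^ (k+1) := (pow_succ' p k).symm
      · rw [Polynomial.eval_comp]
        have hy := hG z₀ z₁ h0 h1
        have := hlift (k+1) (by omega) (G.eval (z₀ + (p:ℤ) * z₁)) z₀ hy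
        rwa [hFfix z₀ h0 h1] at this
  obtain ⟨G, hGdeg, hG⟩ := main (e - 1)
  refine ⟨G, hGdeg, fun z₀ z₁ h0 h1 => ?_⟩
  have := hG z₀ z₁ h0 h1
  have he' : e - 1 + 1 = e := by omega
  rw [he'] at this
  exact Int.modEq_iff_dvd.mpr (dvd_sub_comm.mp this)
end

section
/- For every prime p and every integer e ≥ 1, there exists a polynomial H with integer coefficients of degree at most (e−1)(p−1)+1 such that for all integers z₀, z₁ with 0 ≤ z₀ < p, one has H(z₀ + p·z₁) ≡ z₀ (mod p^e). -/
/-!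
Let `f m = m % p` on `ℕ`, let `Δ` be the forward difference and `D = (e-1)(p-1)+1`. Newton's
formula `f m = ∑ₙ C(m, n) Δⁿf(0)` is mirrored modulo `pᵉ` by `H = ∑_{n ≤ D} cₙ X(X-1)⋯(X-n+1)`
with `cₙ n! ≡ Δⁿf(0)`, as soon as `pᵉ ∣ Δⁿf(0)` for `n > D` and such `cₙ` exist, i.e.
`v_p(n!) ≤ v_p(Δⁿf(0))`. Both follow from `p^(j+1) ∣ Δⁿf` for `n ≥ j(p-1)+2`: for `j = 0` because
`f ≡ id` modulo `p`, and the step uses `Δᵖ = -∑_{0<k<p} C(p,k) Δᵏ` on `p`-periodic functions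
(expand `(1 + Δ)ᵖ = 1`), all of whose coefficients are divisible by `p`. Legendre's formula
`(p-1) v_p(n!) < n` then compares the two valuations. Agreement on `ℕ` gives agreement on `ℤ`
because `H(z) ≡ H(z mod pᵉ)`.
-/

open Finset Polynomial fwdDiff Function
open scoped Nat

section FwdDiff

variable {M : Type*} [AddCommMonoid M] (h : M)

theorem dvd_fwdDiff_iter {R : Type*} [CommRing R] {f : M → R} {c : R} (hf : ∀ x, c ∣ f x)
    (n : ℕ) (y : M) : c ∣ Δ_[h] ^[n] f y := by
  rw [fwdDiff_iter_eq_sum_shift]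
  exact dvd_sum fun k _ => by rw [zsmul_eq_mul]; exact dvd_mul_of_dvd_right (hf _) _

theorem Function.Periodic.fwdDiff_iter {G : Type*} [AddCommGroup G] {f : M → G} {c : M}
    (hf : Periodic f c) (n : ℕ) : Periodic (Δ_[h] ^[n] f) c := fun y => by
  rw [← fwdDiff_iter_comp_add, show (fun r => f (r + c)) = f from funext hf]

theorem fwdDiff_iter_eq_neg_sum_of_periodic {G : Type*} [AddCommGroup G] {f : M → G} {n : ℕ}
    (hn : n ≠ 0) (hf : Periodic f (n • h)) (y : M) :
    Δ_[h] ^[n] f y = -∑ k ∈ Ico 1 n, n.choose k • Δ_[h] ^[k] f y := by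
  have hnewton := shift_eq_sum_fwdDiff_iter h f n y
  rw [hf, range_eq_Ico, sum_eq_sum_Ico_succ_bot (by omega), sum_Ico_succ_top (by omega)]
    at hnewton
  simp only [Nat.choose_zero_right, Nat.choose_self, iterate_zero, id_eq, one_smul] at hnewton
  rw [eq_neg_iff_add_eq_zero, add_comm]
  exact add_eq_left.mp hnewton.symm

theorem modEq_of_fwdDiff_iter_zero_modEq {f g : ℕ → ℤ} {m : ℤ}
    (hfg : ∀ k, Δ_[1] ^[k] f 0 ≡ Δ_[1] ^[k] g 0 [ZMOD m]) (n : ℕ) : f n ≡ g n [ZMOD m] := by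
  have newton (f : ℕ → ℤ) := shift_eq_sum_fwdDiff_iter 1 f n 0
  simp only [zero_add, smul_eq_mul, mul_one] at newton
  rw [newton f, newton g]
  exact Int.ModEq.sum fun k _ => (hfg k).mul_left _

theorem pow_dvd_fwdDiff_iter_of_periodic {p : ℕ} (hp : p.Prime) {f : M → ℤ}
    (hf : Periodic f (p • h)) (hf₂ : ∀ y, (p : ℤ) ∣ Δ_[h] ^[2] f y) (j : ℕ) :
    ∀ n, j * (p - 1) + 2 ≤ n → ∀ y, (p : ℤ) ^ (j + 1) ∣ Δ_[h] ^[n] f y := by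
  induction j with
  | zero =>
    intro n hn y
    obtain ⟨m, rfl⟩ := Nat.exists_eq_add_of_le' (show 2 ≤ n by omega)
    rw [iterate_add_apply, zero_add, pow_one]
    exact dvd_fwdDiff_iter h hf₂ m y
  | succ j ih =>
    intro n hn y
    rw [add_mul, one_mul] at hn
    obtain ⟨m, rfl⟩ := Nat.exists_eq_add_of_le (show p ≤ n by omega)
    rw [iterate_add_apply,
      fwdDiff_iter_eq_neg_sum_of_periodic h hp.ne_zero (hf.fwdDiff_iter h m), dvd_neg, pow_succ']
    refine dvd_sum fun k hk => ?_
    rw [mem_Ico] at hk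
    rw [nsmul_eq_mul, ← iterate_add_apply]
    exact mul_dvd_mul (Int.natCast_dvd_natCast.mpr (hp.dvd_choose_self (by omega) hk.2))
      (ih _ (by omega) y)

end FwdDiff

def lowestDigit (p m : ℕ) : ℤ := m % p

theorem lowestDigit_periodic (p : ℕ) : Periodic (lowestDigit p) p := fun m => by
  simp [lowestDigit]

theorem dvd_fwdDiff_iter_two_lowestDigit (p y : ℕ) : (p : ℤ) ∣ Δ_[1] ^[2] (lowestDigit p) y := by
  have hdigit (m : ℕ) : (p : ℤ) ∣ m - lowestDigit p m := Int.dvd_self_sub_emod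
  rw [show Δ_[1] ^[2] (lowestDigit p) y = 2 * ((y + 1 : ℕ) - lowestDigit p (y + 1))
      - ((y + 1 + 1 : ℕ) - lowestDigit p (y + 1 + 1)) - (y - lowestDigit p y) by
    simp only [iterate_succ, iterate_zero, comp_apply, id_eq, fwdDiff]; push_cast; ring]
  exact dvd_sub (dvd_sub (dvd_mul_of_dvd_right (hdigit _) _) (hdigit _)) (hdigit _)

theorem pow_dvd_fwdDiff_iter_lowestDigit {p : ℕ} (hp : p.Prime) {j n : ℕ}
    (hn : j * (p - 1) + 2 ≤ n) (y : ℕ) : (p : ℤ) ^ (j + 1) ∣ Δ_[1] ^[n] (lowestDigit p) y :=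
  pow_dvd_fwdDiff_iter_of_periodic 1 hp (by simpa using lowestDigit_periodic p)
    (dvd_fwdDiff_iter_two_lowestDigit p) j n hn y

theorem ordProj_factorial_dvd_fwdDiff_iter_lowestDigit {p : ℕ} (hp : p.Prime) (n y : ℕ) :
    (ordProj[p] n ! : ℤ) ∣ Δ_[1] ^[n] (lowestDigit p) y := by
  rcases hj : (n !).factorization p with _ | j
  · simp
  have hn : n ≠ 0 := by rintro rfl; simp at hj
  have hlegendre := @sub_one_mul_padicValNat_factorial_lt_of_ne_zero p ⟨hp⟩ n hn
  rw [← Nat.factorization_def _ hp, hj, mul_add_one, mul_comm] at hlegendre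
  exact pow_dvd_fwdDiff_iter_lowestDigit hp (by have := hp.one_lt; omega) y

theorem exists_mul_modEq_of_ordProj_dvd {p k : ℕ} (hp : p.Prime) (hk : k ≠ 0) {a : ℤ}
    (ha : (ordProj[p] k : ℤ) ∣ a) (e : ℕ) : ∃ c : ℤ, c * k ≡ a [ZMOD p ^ e] := by
  obtain ⟨b, rfl⟩ := ha
  have hcop : IsCoprime (ordCompl[p] k : ℤ) ((p : ℤ) ^ e) := by
    exact_mod_cast Nat.isCoprime_iff_coprime.mpr
      ((hp.coprime_iff_not_dvd.mpr (Nat.not_dvd_ordCompl hp hk)).symm.pow_right e)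
  obtain ⟨α, β, hαβ⟩ := hcop
  refine ⟨α * b, (Int.modEq_iff_dvd.mpr ⟨-(ordProj[p] k * b * β), ?_⟩).symm⟩
  have hk' : (k : ℤ) = ordProj[p] k * ordCompl[p] k := by
    exact_mod_cast (Nat.ordProj_mul_ordCompl_eq_self k p).symm
  rw [hk']
  linear_combination (ordProj[p] k * b : ℤ) * hαβ

theorem exists_natDegree_le_eval_modEq (g : ℕ → ℤ) (m : ℤ) (D : ℕ)
    (hlow : ∀ n ≤ D, ∃ c : ℤ, c * n ! ≡ Δ_[1] ^[n] g 0 [ZMOD m])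
    (hhigh : ∀ n, D < n → Δ_[1] ^[n] g 0 ≡ 0 [ZMOD m]) :
    ∃ H : ℤ[X], H.natDegree ≤ D ∧ ∀ k : ℕ, H.eval (k : ℤ) ≡ g k [ZMOD m] := by
  choose! c hc using hlow
  set H : ℤ[X] := ∑ n ∈ range (D + 1), C (c n) * descPochhammer ℤ n
  have hH : (fun k : ℕ => H.eval (k : ℤ)) =
      ∑ n ∈ range (D + 1), (c n * n !) • fun k : ℕ => (k.choose n : ℤ) := by
    ext k
    simp [H, eval_finsetSum, descPochhammer_eval_eq_descFactorial,
      Nat.descFactorial_eq_factorial_mul_choose, mul_assoc]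
  refine ⟨H, natDegree_sum_le_of_forall_le _ _ fun n hn => ?_, ?_⟩
  · exact (natDegree_C_mul_le _ _).trans
      ((descPochhammer_natDegree ℤ n).trans_le (Nat.lt_succ_iff.mp (mem_range.mp hn)))
  refine modEq_of_fwdDiff_iter_zero_modEq fun n => ?_
  simp only [hH, fwdDiff_iter_finsetSum, fwdDiff_iter_const_smul, Finset.sum_apply,
    Pi.smul_apply, fwdDiff_iter_choose_zero, smul_eq_mul, mul_ite, mul_one, mul_zero, sum_ite_eq,
    mem_range, Nat.lt_succ_iff]
  split_ifs with hn
  · exact hc n hn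
  · exact (hhigh n (by omega)).symm

theorem Polynomial.eval_emod_modEq (H : ℤ[X]) (z m : ℤ) : H.eval (z % m) ≡ H.eval z [ZMOD m] :=
  Int.modEq_iff_dvd.mpr
    ((Int.modEq_iff_dvd.mp (Int.mod_modEq z m)).trans (sub_dvd_eval_sub _ _ H))

/-- Lowest-digit-extraction polynomial of degree at most (e-1)(p-1)+1 (Chen–Han). -/
theorem lowest_digit_extraction_CH (p : ℕ) (hp : p.Prime) (e : ℕ) (he : 1 ≤ e) :
    ∃ H : Polynomial ℤ, H.natDegree ≤ (e - 1) * (p - 1) + 1 ∧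
      ∀ z₀ z₁ : ℤ, 0 ≤ z₀ → z₀ < (p : ℤ) →
        H.eval (z₀ + (p : ℤ) * z₁) ≡ z₀ [ZMOD (p : ℤ) ^ e] := by
  have hhigh (n : ℕ) (hn : (e - 1) * (p - 1) + 1 < n) :
      Δ_[1] ^[n] (lowestDigit p) 0 ≡ 0 [ZMOD (p : ℤ) ^ e] := by
    have := pow_dvd_fwdDiff_iter_lowestDigit hp hn 0
    rwa [Nat.sub_add_cancel he, ← Int.modEq_zero_iff_dvd] at this
  obtain ⟨H, hdeg, hH⟩ := exists_natDegree_le_eval_modEq (lowestDigit p) ((p : ℤ) ^ e) _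
    (fun n _ => exists_mul_modEq_of_ordProj_dvd hp n.factorial_ne_zero
      (ordProj_factorial_dvd_fwdDiff_iter_lowestDigit hp n 0) e) hhigh
  refine ⟨H, hdeg, fun z₀ z₁ h₀ h₁ => ?_⟩
  set z := z₀ + (p : ℤ) * z₁
  have hres : ((z % (p : ℤ) ^ e).toNat : ℤ) = z % (p : ℤ) ^ e :=
    Int.toNat_of_nonneg (Int.emod_nonneg _ (pow_ne_zero _ (mod_cast hp.ne_zero)))
  calc H.eval z ≡ H.eval ((z % (p : ℤ) ^ e).toNat : ℤ) [ZMOD (p : ℤ) ^ e] := by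
        rw [hres]; exact (H.eval_emod_modEq z _).symm
    _ ≡ lowestDigit p (z % (p : ℤ) ^ e).toNat [ZMOD (p : ℤ) ^ e] := hH _
    _ = z₀ := by
        rw [lowestDigit, hres, Int.emod_emod_of_dvd _ (dvd_pow_self _ (by omega)),
          Int.add_mul_emod_self_left, Int.emod_eq_of_lt h₀ h₁]
end

section
/- For every prime p and every integer e ≥ 1, there exists a polynomial L with integer coefficients of degree at most ep−1 such that for all integers z₀, z₁ with 0 ≤ z₀ < p, one has L(z₀ + p·z₁) ≡ z₀ (mod p^e). -/
/-!
By Euler's theorem, `(x - i) ^ (e * φ (p ^ e))` is `0` or `1` modulo `p ^ e` according as `p`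
divides `x - i` or not, so `∑ i < p, i * (1 - (x - i) ^ (e * φ (p ^ e)))` is congruent to the
lowest base-`p` digit `x % p`. Its degree is lowered by reducing it modulo the monic polynomial
`X (X - 1) ⋯ (X - (e p - 1))`, whose values at integers are multiples of `(e p)!`, hence of `p ^ e`.
-/

open Polynomial Finset Nat

theorem Int.ModEq.pow_totient {a : ℤ} {n : ℕ} (h : IsCoprime a n) : a ^ φ n ≡ 1 [ZMOD n] := by
  rw [← ZMod.intCast_eq_intCast_iff]
  have := congrArg Units.val (ZMod.pow_totient (ZMod.unitOfIsCoprime a h))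
  rw [Units.val_pow_eq_pow_val, ZMod.coe_unitOfIsCoprime, Units.val_one] at this
  exact_mod_cast this

theorem Int.pow_modEq_zero_of_dvd {a n : ℤ} {e k : ℕ} (h : n ∣ a) (hek : e ≤ k) :
    a ^ k ≡ 0 [ZMOD n ^ e] :=
  Int.modEq_zero_iff_dvd.2 ((pow_dvd_pow_of_dvd h e).trans (pow_dvd_pow a hek))

theorem factorial_pow_dvd_factorial_mul (p e : ℕ) : p ! ^ e ∣ (e * p)! := by
  induction e with
  | zero => simp
  | succ e ih =>
    rw [pow_succ, add_one_mul]
    exact (mul_dvd_mul_right ih _).trans (factorial_mul_factorial_dvd_factorial_add _ _)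

theorem pow_dvd_factorial_mul {p : ℕ} (hp : 0 < p) (e : ℕ) : p ^ e ∣ (e * p)! :=
  (pow_dvd_pow_of_dvd (dvd_factorial hp le_rfl) e).trans (factorial_pow_dvd_factorial_mul p e)

theorem factorial_dvd_descPochhammer_eval (k : ℕ) (t : ℤ) :
    (k ! : ℤ) ∣ (descPochhammer ℤ k).eval t := by
  rw [eval_eq_smeval, Ring.descPochhammer_eq_factorial_smul_choose, nsmul_eq_mul]
  exact dvd_mul_right _ _

namespace Polynomial

theorem natDegree_modByMonic_le_sub_one {R : Type*} [CommRing R] [Nontrivial R] (f : R[X])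
    {q : R[X]} (hq : q.Monic) : (f %ₘ q).natDegree ≤ q.natDegree - 1 := by
  rcases eq_or_ne q 1 with rfl | hq1
  · simp [modByMonic_one]
  · have := natDegree_modByMonic_lt f hq hq1
    omega

theorem eval_modByMonic_modEq (f q : ℤ[X]) {n : ℤ} (hq : ∀ t, n ∣ q.eval t) (t : ℤ) :
    (f %ₘ q).eval t ≡ f.eval t [ZMOD n] := by
  obtain ⟨g, hg⟩ := dvd_modByMonic_sub f q
  rw [Int.modEq_comm, Int.modEq_iff_dvd, ← eval_sub, hg, eval_mul]
  exact (hq t).mul_right _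

end Polynomial

noncomputable def lowestDigitPoly (p e : ℕ) : ℤ[X] :=
  ∑ i ∈ range p, C (i : ℤ) * (1 - (X - C (i : ℤ)) ^ (e * φ (p ^ e)))

theorem one_sub_pow_totient_modEq_ite {p : ℕ} (hp : p.Prime) (e : ℕ) (a : ℤ) :
    1 - a ^ (e * φ (p ^ e)) ≡ if (p : ℤ) ∣ a then 1 else 0 [ZMOD (p : ℤ) ^ e] := by
  split_ifs with ha
  · have hφ : e ≤ e * φ (p ^ e) := le_mul_of_one_le_right' (totient_pos.2 (pow_pos hp.pos e))
    simpa using (Int.pow_modEq_zero_of_dvd ha hφ).sub_left 1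
  · have hcop : IsCoprime a ((p ^ e : ℕ) : ℤ) := by
      push_cast
      exact ((Nat.prime_iff_prime_int.mp hp).coprime_iff_not_dvd.2 ha).symm.pow_right
    have h1 : a ^ (e * φ (p ^ e)) ≡ 1 [ZMOD (p : ℤ) ^ e] := by
      simpa [pow_mul'] using (Int.ModEq.pow_totient hcop).pow e
    simpa using h1.sub_left 1

theorem sum_range_mul_ite_dvd_sub {p : ℕ} (hp : 0 < p) (x : ℤ) :
    ∑ i ∈ range p, (i : ℤ) * (if (p : ℤ) ∣ x - i then 1 else 0) = x % p := by
  have hx0 : 0 ≤ x % p := Int.emod_nonneg x (by omega)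
  have hxp : x % p < p := Int.emod_lt_of_pos x (by omega)
  have hdvd : ∀ i ∈ range p, (p : ℤ) ∣ x - i ↔ i = (x % p).toNat := by
    intro i hi
    have hi' : (i : ℤ) < p := by simpa using hi
    rw [← Int.modEq_iff_dvd, Int.ModEq, Int.emod_eq_of_lt (by omega) hi']
    omega
  calc ∑ i ∈ range p, (i : ℤ) * (if (p : ℤ) ∣ x - i then 1 else 0)
      = ∑ i ∈ range p, if i = (x % p).toNat then (i : ℤ) else 0 :=
        sum_congr rfl fun i hi => by simp only [hdvd i hi, mul_ite, mul_one, mul_zero]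
    _ = x % p := by rw [sum_ite_eq', if_pos (mem_range.2 (by omega))]; omega

theorem lowestDigitPoly_eval_modEq {p : ℕ} (hp : p.Prime) (e : ℕ) (x : ℤ) :
    (lowestDigitPoly p e).eval x ≡ x % p [ZMOD (p : ℤ) ^ e] := by
  rw [← sum_range_mul_ite_dvd_sub hp.pos x, lowestDigitPoly, eval_finsetSum]
  refine Int.ModEq.sum fun i _ => ?_
  simpa using (one_sub_pow_totient_modEq_ite hp e (x - i)).mul_left (i : ℤ)

theorem lowest_digit_extraction_new_general (p : ℕ) (hp : p.Prime) (e : ℕ) :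
    ∃ L : Polynomial ℤ, L.natDegree ≤ e * p - 1 ∧
      ∀ z₀ z₁ : ℤ, 0 ≤ z₀ → z₀ < (p : ℤ) →
        L.eval (z₀ + (p : ℤ) * z₁) ≡ z₀ [ZMOD (p : ℤ) ^ e] := by
  have hvanish : ∀ t, (p : ℤ) ^ e ∣ (descPochhammer ℤ (e * p)).eval t := fun t =>
    (Int.natCast_dvd_natCast.2 (pow_dvd_factorial_mul hp.pos e)).trans
      (by simpa using factorial_dvd_descPochhammer_eval (e * p) t)
  refine ⟨lowestDigitPoly p e %ₘ descPochhammer ℤ (e * p), ?_, fun z₀ z₁ h0 h1 => ?_⟩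
  · simpa [descPochhammer_natDegree] using
      natDegree_modByMonic_le_sub_one (lowestDigitPoly p e) (monic_descPochhammer ℤ (e * p))
  · calc _ ≡ (lowestDigitPoly p e).eval (z₀ + p * z₁) [ZMOD (p : ℤ) ^ e] :=
          eval_modByMonic_modEq _ _ hvanish _
      _ ≡ (z₀ + p * z₁) % p [ZMOD (p : ℤ) ^ e] := lowestDigitPoly_eval_modEq hp e _
      _ = z₀ := by rw [Int.add_mul_emod_self_left, Int.emod_eq_of_lt h0 h1]

/-- Lowest-digit-extraction polynomial of degree at most ep-1 (this paper). -/
theorem lowest_digit_extraction_new (p : ℕ) (hp : p.Prime) (e : ℕ) (he : 1 ≤ e) :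
    ∃ L : Polynomial ℤ, L.natDegree ≤ e * p - 1 ∧
      ∀ z₀ z₁ : ℤ, 0 ≤ z₀ → z₀ < (p : ℤ) →
        L.eval (z₀ + (p : ℤ) * z₁) ≡ z₀ [ZMOD (p : ℤ) ^ e] :=
  lowest_digit_extraction_new_general p hp e
end

section
/- Let p be a prime and e ≥ 1 an integer. Let f be a polynomial with integer coefficients that is monic (its leading coefficient is 1), has positive degree, and satisfies p^e ∣ f(x) for every integer x. Then the degree of f is at least ord_p^{−1}(e), where ord_p^{−1}(e) denotes the smallest integer n ≥ 0 such that p^e divides n!. -/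
open Polynomial fwdDiff

private lemma key_diff (d : ℕ) : ∀ f : Polynomial ℤ, f.natDegree ≤ d →
    (fwdDiff (1 : ℤ))^[d] (fun x => f.eval x) = fun _ => (d.factorial : ℤ) * f.coeff d := by
  induction d with
  | zero =>
    intro f hf
    rw [Polynomial.eq_C_of_natDegree_le_zero hf]
    funext x
    simp
  | succ d ih =>
    intro f hf
    set g : Polynomial ℤ := Polynomial.taylor 1 f - f with hg
    have hgeval : ∀ x : ℤ, g.eval x = f.eval (x + 1) - f.eval x := by
      intro x
      simp [hg, Polynomial.taylor_eval]
    have hgcoeff : ∀ k, d < k → g.coeff k = 0 := by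
      intro k hk
      have hdk : f.natDegree ≤ k := le_trans hf hk
      have h1 : (Polynomial.hasseDeriv k f).natDegree ≤ 0 := by
        have := Polynomial.natDegree_hasseDeriv_le f k
        omega
      have hc := Polynomial.eq_C_of_natDegree_le_zero h1
      have hcval : (Polynomial.hasseDeriv k f).coeff 0 = f.coeff k := by
        simp [Polynomial.hasseDeriv_coeff]
      rw [hg, Polynomial.coeff_sub, Polynomial.taylor_coeff, hc, Polynomial.eval_C, hcval,
        sub_self]
    have hgdeg : g.natDegree ≤ d := Polynomial.natDegree_le_iff_coeff_eq_zero.mpr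
      (fun k hk => hgcoeff k (Nat.lt_of_lt_of_le (Nat.lt_succ_iff.mpr le_rfl) hk))
    have hgd : g.coeff d = (d + 1 : ℤ) * f.coeff (d + 1) := by
      have h1 : (Polynomial.hasseDeriv d f).natDegree < 2 := by
        have := Polynomial.natDegree_hasseDeriv_le f d
        omega
      have heval : (Polynomial.hasseDeriv d f).eval 1 =
          ∑ i ∈ Finset.range 2, (Polynomial.hasseDeriv d f).coeff i * 1 ^ i :=
        Polynomial.eval_eq_sum_range' h1 1
      have : g.coeff d = (Polynomial.hasseDeriv d f).eval 1 - f.coeff d := by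
        simp [hg, Polynomial.taylor_coeff]
      rw [this, heval]
      simp [Polynomial.hasseDeriv_coeff, Finset.sum_range_succ, add_comm 1 d,
        Nat.choose_succ_self_right]
    have hstep : fwdDiff (1 : ℤ) (fun x => f.eval x) = fun x => g.eval x := by
      funext x
      simp [fwdDiff, hgeval]
    rw [Function.iterate_succ_apply, hstep, ih g hgdeg, hgd]
    funext x
    push_cast [Nat.factorial_succ]
    ring

/-- Lower bound on the degree of a monic polynomial vanishing mod p^e on all integers. -/
theorem monic_vanishing_degree_lower_bound (p : ℕ) (hp : p.Prime) (e : ℕ) (he : 1 ≤ e)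
    (f : Polynomial ℤ) (hmonic : f.Monic) (hdeg : 0 < f.natDegree)
    (hvan : ∀ x : ℤ, (p : ℤ) ^ e ∣ f.eval x) :
    sInf {n : ℕ | p ^ e ∣ n.factorial} ≤ f.natDegree := by
  set d := f.natDegree
  have hkey := key_diff d f le_rfl
  have hlead : f.coeff d = 1 := hmonic
  have h0 : (fwdDiff (1 : ℤ))^[d] (fun x => f.eval x) 0 = (d.factorial : ℤ) := by
    rw [hkey, hlead, mul_one]
  have hsum := fwdDiff_iter_eq_sum_shift (1 : ℤ) (fun x => f.eval x) d 0
  rw [h0] at hsum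
  have hdvd : (p : ℤ) ^ e ∣ (d.factorial : ℤ) := by
    rw [hsum]
    apply Finset.dvd_sum
    intro k hk
    rw [zsmul_eq_mul]
    exact Dvd.dvd.mul_left (hvan _) _
  have : p ^ e ∣ d.factorial := by
    rw [← Int.natCast_dvd_natCast]
    push_cast
    exact hdvd
  exact Nat.sInf_le this
end

section
/- Let p be a prime, e ≥ 1 an integer, and let f be a polynomial with integer coefficients of degree k, written in the falling factorial basis as f(x) = a₀ + a₁·x + a₂·x(x−1) + ⋯ + a_k·∏_{i=0}^{k−1}(x−i). If p^e divides f(x) for every integer x, then for every i with 0 ≤ i ≤ k, p^e divides a_i · p^{ord_p(i)}, where ord_p(i) is the largest integer t ≥ 0 with p^t ∣ i!. -/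
lemma prod_range_sub_cast (i u : ℕ) (h : u ≤ i) :
    ∏ v ∈ Finset.range u, ((i : ℤ) - (v : ℤ)) = (u.factorial * i.choose u : ℕ) := by
  rw [← Nat.descFactorial_eq_factorial_mul_choose, Nat.descFactorial_eq_prod_range,
    Nat.cast_prod]
  refine Finset.prod_congr rfl fun v hv => ?_
  rw [Finset.mem_range] at hv
  rw [Nat.cast_sub (le_of_lt (lt_of_lt_of_le hv h))]

lemma key_dvd_factorial (p : ℕ) (e k : ℕ) (a : ℕ → ℤ)
    (hvan : ∀ x : ℤ, (p : ℤ) ^ e ∣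
      ∑ u ∈ Finset.range (k + 1), a u * ∏ v ∈ Finset.range u, (x - (v : ℤ))) :
    ∀ i : ℕ, i ≤ k → (p : ℤ) ^ e ∣ a i * (i.factorial : ℤ) := by
  intro i
  induction i using Nat.strong_induction_on with
  | _ i ih =>
    intro hik
    have hsum := hvan (i : ℤ)
    have hzero : ∀ u ∈ Finset.range (k + 1), u ∉ Finset.range (i + 1) →
        a u * ∏ v ∈ Finset.range u, ((i : ℤ) - (v : ℤ)) = 0 := by
      intro u _ hu
      rw [Finset.mem_range, not_lt] at hu
      have : ∏ v ∈ Finset.range u, ((i : ℤ) - (v : ℤ)) = 0 :=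
        Finset.prod_eq_zero (Finset.mem_range.mpr hu) (by ring)
      rw [this, mul_zero]
    rw [← Finset.sum_subset (Finset.range_subset_range.mpr (by omega)) hzero] at hsum
    rw [Finset.sum_range_succ] at hsum
    have hrest : (p : ℤ) ^ e ∣ ∑ u ∈ Finset.range i,
        a u * ∏ v ∈ Finset.range u, ((i : ℤ) - (v : ℤ)) := by
      refine Finset.dvd_sum fun u hu => ?_
      rw [Finset.mem_range] at hu
      rw [prod_range_sub_cast i u (le_of_lt hu), Nat.cast_mul, ← mul_assoc]
      exact Dvd.dvd.mul_right (ih u hu (by omega)) _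
    have hlast : (p : ℤ) ^ e ∣ a i * ∏ v ∈ Finset.range i, ((i : ℤ) - (v : ℤ)) :=
      (dvd_add_right hrest).mp hsum
    rwa [prod_range_sub_cast i i le_rfl, Nat.choose_self, mul_one] at hlast

/-- Coefficients in the falling factorial basis of a polynomial vanishing mod p^e. -/
theorem falling_factorial_coeffs_divisible (p : ℕ) (hp : p.Prime) (e : ℕ) (he : 1 ≤ e)
    (k : ℕ) (a : ℕ → ℤ)
    (hvan : ∀ x : ℤ, (p : ℤ) ^ e ∣
      ∑ u ∈ Finset.range (k + 1), a u * ∏ v ∈ Finset.range u, (x - (v : ℤ))) :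
    ∀ i : ℕ, i ≤ k → (p : ℤ) ^ e ∣ a i * (p : ℤ) ^ (padicValNat p i.factorial) := by
  intro i hik
  have h := key_dvd_factorial p e k a hvan i hik
  set v := padicValNat p i.factorial with hv
  have hfac : i.factorial ≠ 0 := Nat.factorial_ne_zero i
  have hord : p ^ v * (i.factorial / p ^ v) = i.factorial := by
    rw [hv]
    haveI : Fact p.Prime := ⟨hp⟩
    rw [← Nat.factorization_def _ hp]
    exact Nat.ordProj_mul_ordCompl_eq_self i.factorial p
  have hnd : ¬ p ∣ (i.factorial / p ^ v) := by
    rw [hv, ← Nat.factorization_def _ hp]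
    exact Nat.not_dvd_ordCompl hp hfac
  have hcop : IsCoprime ((p : ℤ) ^ e) ((i.factorial / p ^ v : ℕ) : ℤ) := by
    apply IsCoprime.pow_left
    exact Nat.isCoprime_iff_coprime.mpr ((Nat.Prime.coprime_iff_not_dvd hp).mpr hnd)
  have : a i * (i.factorial : ℤ) = a i * (p : ℤ) ^ v * ((i.factorial / p ^ v : ℕ) : ℤ) := by
    rw [mul_assoc, ← Nat.cast_pow, ← Nat.cast_mul, hord]
  rw [this] at h
  exact hcop.dvd_of_dvd_mul_right h
end

section
/- For every prime p and all integers r, e with 1 < r < e, there is no polynomial f with integer coefficients such that for all integers z₀, z₁ with 0 ≤ z₀ < p^r, one has f(z₀ + p^r·z₁) ≡ p^r·z₁ (mod p^e). -/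
/-!
Write `q = p ^ r`. Taking `z₁ = 0` gives `f(0) ≡ f(p) ≡ 0 (mod p²)`, because `p < q` and
`2 ≤ e`; Taylor expansion `f(x + h) ≡ f(x) + h f'(x) (mod h²)` at `x = 0`, `h = p` then forces
`p ∣ f'(0)`. The same expansion with `h = q` yields `f(q) ≡ f(0) (mod p^(r+1))`, whereas
`z₀ = 0, z₁ = 1` gives `f(q) - f(0) ≡ q (mod p^e)`, so `p^(r+1) ∣ p^r`.
-/

open Polynomial

namespace Polynomial

variable {R : Type*} [CommRing R]

theorem sq_dvd_eval_add_sub_eval_sub_derivative_mul (f : R[X]) (x h : R) :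
    h ^ 2 ∣ f.eval (x + h) - f.eval x - f.derivative.eval x * h := by
  obtain ⟨k, hk⟩ := f.binomExpansion x h
  exact ⟨k, by rw [hk]; ring⟩

theorem dvd_derivative_eval_of_sq_dvd_eval [IsDomain R] {f : R[X]} {x a : R} (ha : a ≠ 0)
    (hx : a ^ 2 ∣ f.eval x) (hxa : a ^ 2 ∣ f.eval (x + a)) : a ∣ f.derivative.eval x := by
  have h := dvd_sub (dvd_sub hxa hx) (f.sq_dvd_eval_add_sub_eval_sub_derivative_mul x a)
  rw [sub_sub_cancel, sq, mul_comm] at h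
  exact (mul_dvd_mul_iff_right ha).mp h

theorem pow_succ_dvd_eval_add_pow_sub_eval {f : R[X]} {x p : R} (hd : p ∣ f.derivative.eval x)
    {r : ℕ} (hr : 1 ≤ r) : p ^ (r + 1) ∣ f.eval (x + p ^ r) - f.eval x := by
  have hsq : p ^ (r + 1) ∣ (p ^ r) ^ 2 := by
    rw [← pow_mul]
    exact pow_dvd_pow p (by omega)
  have hlin : p ^ (r + 1) ∣ f.derivative.eval x * p ^ r := by
    rw [pow_succ']
    exact mul_dvd_mul hd dvd_rfl
  have h := dvd_add (hsq.trans (f.sq_dvd_eval_add_sub_eval_sub_derivative_mul x (p ^ r))) hlin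
  rwa [sub_add_cancel] at h

end Polynomial

/-- No polynomial removes the r lowest base-p digits mod p^e when 1 < r < e. -/
theorem no_digit_removal_polynomial (p : ℕ) (hp : p.Prime) (r e : ℕ)
    (hr : 1 < r) (hre : r < e) :
    ¬ ∃ f : Polynomial ℤ, ∀ z₀ z₁ : ℤ, 0 ≤ z₀ → z₀ < (p : ℤ) ^ r →
      f.eval (z₀ + (p : ℤ) ^ r * z₁) ≡ (p : ℤ) ^ r * z₁ [ZMOD (p : ℤ) ^ e] := by
  rintro ⟨f, hf⟩
  have hp1 : (1 : ℤ) < p := by exact_mod_cast hp.one_lt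
  have hroot (z₀ : ℤ) (h0 : 0 ≤ z₀) (hlt : z₀ < (p : ℤ) ^ r) : (p : ℤ) ^ e ∣ f.eval z₀ := by
    simpa using (hf z₀ 0 h0 hlt).symm.dvd
  have hsq : (p : ℤ) ^ 2 ∣ (p : ℤ) ^ e := pow_dvd_pow _ (by omega)
  have hderiv : (p : ℤ) ∣ f.derivative.eval 0 :=
    dvd_derivative_eval_of_sq_dvd_eval (by omega) (hsq.trans (hroot 0 le_rfl (by positivity)))
      (by simpa using hsq.trans (hroot p (by omega) (lt_self_pow₀ hp1 hr)))
  have hflat := pow_succ_dvd_eval_add_pow_sub_eval hderiv (by omega : 1 ≤ r)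
  have hshift : (p : ℤ) ^ (r + 1) ∣ (p : ℤ) ^ r - (f.eval (0 + (p : ℤ) ^ r) - f.eval 0) := by
    have h := dvd_add (hf 0 1 le_rfl (by positivity)).dvd (hroot 0 le_rfl (by positivity))
    simp only [mul_one] at h
    exact (pow_dvd_pow _ (by omega : r + 1 ≤ e)).trans (by convert h using 1; ring)
  have hdvd : (p : ℤ) ^ (r + 1) ∣ (p : ℤ) ^ r := by simpa using dvd_add hshift hflat
  have := (Nat.pow_dvd_pow_iff_le_right hp.one_lt).mp (by exact_mod_cast hdvd)
  omega
end

section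
/- For every prime p and all integers r, e with 1 < r < e, there is no polynomial f with integer coefficients such that for all integers z₀, z₁ with 0 ≤ z₀ < p^r, one has f(z₀ + p^r·z₁) ≡ z₀ (mod p^e). -/
/-- No polynomial extracts the r lowest base-p digits mod p^e when 1 < r < e. -/
theorem no_digit_extraction_polynomial (p : ℕ) (hp : p.Prime) (r e : ℕ)
    (hr : 1 < r) (hre : r < e) :
    ¬ ∃ f : Polynomial ℤ, ∀ z₀ z₁ : ℤ, 0 ≤ z₀ → z₀ < (p : ℤ) ^ r →
      f.eval (z₀ + (p : ℤ) ^ r * z₁) ≡ z₀ [ZMOD (p : ℤ) ^ e] := by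
  rintro ⟨f, H⟩
  have hp1 : 1 < (p : ℤ) := by exact_mod_cast hp.one_lt
  have hp0 : (0 : ℤ) < p := by linarith
  have hpr : (p : ℤ) < (p : ℤ) ^ r := by
    calc (p : ℤ) = (p : ℤ) ^ 1 := (pow_one _).symm
    _ < (p : ℤ) ^ r := pow_lt_pow_right₀ hp1 hr
  have h0 : f.eval 0 ≡ 0 [ZMOD (p : ℤ) ^ e] := by
    simpa using H 0 0 le_rfl (by positivity)
  have h1 : f.eval ((p : ℤ) ^ r) ≡ 0 [ZMOD (p : ℤ) ^ e] := by
    simpa using H 0 1 le_rfl (by positivity)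
  have h2 : f.eval (p : ℤ) ≡ (p : ℤ) [ZMOD (p : ℤ) ^ e] := by
    simpa using H (p : ℤ) 0 (le_of_lt hp0) hpr
  obtain ⟨k, hk⟩ := f.binomExpansion 0 ((p : ℤ) ^ r)
  obtain ⟨k', hk'⟩ := f.binomExpansion 0 (p : ℤ)
  set d := f.derivative.eval 0 with hd
  rw [zero_add] at hk hk'
  -- Step 1 : p ∣ d
  have hdvdA : ((p : ℤ) ^ e) ∣ (f.eval ((p : ℤ) ^ r) - f.eval 0) :=
    Int.ModEq.dvd (h0.trans h1.symm)
  have hA : ((p : ℤ)) ∣ d := by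
    have h1e : ((p : ℤ) ^ (r + 1)) ∣ ((p : ℤ) ^ e) := pow_dvd_pow _ (by omega)
    have h2e : ((p : ℤ) ^ (r + 1)) ∣ (k * ((p : ℤ) ^ r) ^ 2) := by
      have : ((p : ℤ) ^ (r + 1)) ∣ (((p : ℤ) ^ r) ^ 2) := by
        rw [← pow_mul]; exact pow_dvd_pow _ (by omega)
      exact this.mul_left k
    have hsum : ((p : ℤ) ^ (r + 1)) ∣ (d * (p : ℤ) ^ r + k * ((p : ℤ) ^ r) ^ 2) := by
      have h := h1e.trans hdvdA
      have heq : f.eval ((p : ℤ) ^ r) - f.eval 0 = d * (p : ℤ) ^ r + k * ((p : ℤ) ^ r) ^ 2 := by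
        rw [hk]; ring
      rwa [heq] at h
    have hmul : ((p : ℤ) ^ (r + 1)) ∣ (d * (p : ℤ) ^ r) := by
      simpa using hsum.sub h2e
    have : (p : ℤ) ^ r * (p : ℤ) ∣ (p : ℤ) ^ r * d := by
      rw [show (p : ℤ) ^ r * (p : ℤ) = (p : ℤ) ^ (r + 1) by ring,
        mul_comm]
      exact hmul
    exact (mul_dvd_mul_iff_left (pow_ne_zero r (by linarith))).mp this
  -- Step 2 : p ∣ d - 1
  have hdvdB : ((p : ℤ) ^ e) ∣ (f.eval (p : ℤ) - f.eval 0 - (p : ℤ)) := by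
    have hx : (p:ℤ)^e ∣ (f.eval (p:ℤ) - (p:ℤ)) := Int.ModEq.dvd h2.symm
    have hy : (p:ℤ)^e ∣ (f.eval 0) := by simpa using Int.ModEq.dvd h0.symm
    have h := hx.sub hy
    have heq : f.eval (p : ℤ) - (p : ℤ) - f.eval 0 = f.eval (p : ℤ) - f.eval 0 - (p : ℤ) := by ring
    rwa [heq] at h
  have hB : ((p : ℤ)) ∣ (d - 1) := by
    have h2le : ((p : ℤ) ^ 2) ∣ ((p : ℤ) ^ e) := pow_dvd_pow _ (by omega)
    have hsum : ((p : ℤ) ^ 2) ∣ (d * (p : ℤ) + k' * (p : ℤ) ^ 2 - (p : ℤ)) := by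
      have h := h2le.trans hdvdB
      have heq : f.eval (p : ℤ) - f.eval 0 - (p : ℤ) = d * (p : ℤ) + k' * (p : ℤ) ^ 2 - (p : ℤ) := by
        rw [hk']; ring
      rwa [heq] at h
    have hmul : ((p : ℤ) ^ 2) ∣ ((d - 1) * (p : ℤ)) := by
      have h2e' : ((p : ℤ) ^ 2) ∣ (k' * (p : ℤ) ^ 2) := Dvd.intro_left k' rfl
      have := hsum.sub h2e'
      have heq : d * (p : ℤ) + k' * (p : ℤ) ^ 2 - (p : ℤ) - k' * (p : ℤ) ^ 2 = (d - 1) * (p : ℤ) := by ring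
      rwa [heq] at this
    have : (p : ℤ) * (p : ℤ) ∣ (p : ℤ) * (d - 1) := by
      rw [show (p : ℤ) * (p : ℤ) = (p : ℤ) ^ 2 by ring, mul_comm]
      exact hmul
    exact (mul_dvd_mul_iff_left (by linarith : (p:ℤ) ≠ 0)).mp this
  have : (p : ℤ) ∣ 1 := by
    have := hA.sub hB
    simpa using this
  have := Int.le_of_dvd one_pos this
  linarith
end
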